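/- Let h ∈ ℝ[x,y] be a nonzero polynomial with h(x,y) ≥ 0 for all (x,y) ∈ ℝ², and let ξ ∈ ℝ² be a nonzero vector. Then the symbolic restriction h^ξ of h to the face of its Newton polygon in direction ξ satisfies h^ξ(x,y) ≥ 0 for all (x,y) ∈ ℝ². -/
import Mathlib


open MvPolynomial

open Classical in
/-- The symbolic restriction of `h` to the face of its Newton polygon in direction `ξ`:
the sum of the monomials of `h` whose exponent vector maximizes `⟨ξ, ·⟩` over the support. -/
noncomputable def face (ξ : ℝ × ℝ) (h : MvPolynomial (Fin 2) ℝ) : MvPolynomial (Fin 2) ℝ :=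
  ∑ m ∈ h.support.filter (fun m => ∀ m' ∈ h.support,
      ξ.1 * (m' 0 : ℝ) + ξ.2 * (m' 1 : ℝ) ≤ ξ.1 * (m 0 : ℝ) + ξ.2 * (m 1 : ℝ)),
    monomial m (h.coeff m)

open Filter in
theorem face_nonneg (h : MvPolynomial (Fin 2) ℝ) (hh : h ≠ 0)
    (ξ : ℝ × ℝ) (hξ : ξ ≠ 0)
    (hpos : ∀ p : Fin 2 → ℝ, 0 ≤ eval p h) :
    ∀ p : Fin 2 → ℝ, 0 ≤ eval p (face ξ h) := by
  classical
  intro p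
  set f : (Fin 2 →₀ ℕ) → ℝ := fun m => ξ.1 * (m 0 : ℝ) + ξ.2 * (m 1 : ℝ) with hf
  have hsupp : h.support.Nonempty := by
    rw [Finset.nonempty_iff_ne_empty]
    simpa using hh
  obtain ⟨M, hM, hMmax⟩ := h.support.exists_max_image f hsupp
  set L : ℝ := f M with hL
  set q : Fin 2 → ℝ := ![ξ.1, ξ.2] with hq
  -- the curve evaluation
  have key : ∀ a : ℝ,
      eval (fun i => p i * Real.exp (a * q i)) h * Real.exp (-(a * L))
      = ∑ m ∈ h.support,
          h.coeff m * (p 0 ^ (m 0) * p 1 ^ (m 1)) * Real.exp (a * (f m - L)) := by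
    intro a
    rw [eval_eq', Finset.sum_mul]
    refine Finset.sum_congr rfl fun m _ => ?_
    rw [Fin.prod_univ_two]
    have hq0 : q 0 = ξ.1 := rfl
    have hq1 : q 1 = ξ.2 := rfl
    rw [hq0, hq1, mul_pow, mul_pow, ← Real.exp_nat_mul, ← Real.exp_nat_mul]
    have : Real.exp ((m 0 : ℝ) * (a * ξ.1)) * Real.exp ((m 1 : ℝ) * (a * ξ.2))
        * Real.exp (-(a * L)) = Real.exp (a * (f m - L)) := by
      rw [← Real.exp_add, ← Real.exp_add]
      congr 1
      simp only [hf]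
      ring
    calc h.coeff m * (p 0 ^ (m 0) * Real.exp ((m 0 : ℝ) * (a * ξ.1))
          * (p 1 ^ (m 1) * Real.exp ((m 1 : ℝ) * (a * ξ.2)))) * Real.exp (-(a * L))
        = h.coeff m * (p 0 ^ (m 0) * p 1 ^ (m 1))
          * (Real.exp ((m 0 : ℝ) * (a * ξ.1)) * Real.exp ((m 1 : ℝ) * (a * ξ.2))
            * Real.exp (-(a * L))) := by ring
      _ = _ := by rw [this]
  -- the limit value
  have hface : eval p (face ξ h)
      = ∑ m ∈ h.support,
          (if ∀ m' ∈ h.support, f m' ≤ f m then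
            h.coeff m * (p 0 ^ (m 0) * p 1 ^ (m 1)) else 0) := by
    rw [face, map_sum, ← Finset.sum_filter]
    refine Finset.sum_congr rfl fun m _ => ?_
    rw [eval_monomial, Finsupp.prod_pow, Fin.prod_univ_two]
  -- tendsto
  have htend : Tendsto
      (fun a => eval (fun i => p i * Real.exp (a * q i)) h * Real.exp (-(a * L)))
      atTop (nhds (eval p (face ξ h))) := by
    rw [hface]
    have : ∀ a : ℝ, eval (fun i => p i * Real.exp (a * q i)) h * Real.exp (-(a * L))
        = ∑ m ∈ h.support,
          h.coeff m * (p 0 ^ (m 0) * p 1 ^ (m 1)) * Real.exp (a * (f m - L)) := key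
    simp only [this]
    refine tendsto_finset_sum _ fun m hm => ?_
    by_cases hcond : ∀ m' ∈ h.support, f m' ≤ f m
    · have hfm : f m = L := le_antisymm (hMmax m hm) (hcond M hM)
      have heq : (fun a : ℝ => h.coeff m * (p 0 ^ (m 0) * p 1 ^ (m 1))
            * Real.exp (a * (f m - L)))
          = fun _ => h.coeff m * (p 0 ^ (m 0) * p 1 ^ (m 1)) := by
        funext a
        rw [hfm, sub_self, mul_zero, Real.exp_zero, mul_one]
      rw [heq, if_pos hcond]
      exact tendsto_const_nhds
    · have hlt : f m - L < 0 := by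
        push_neg at hcond
        obtain ⟨m', hm', hlt'⟩ := hcond
        have : f m < L := lt_of_lt_of_le hlt' (hMmax m' hm')
        linarith
      rw [if_neg hcond]
      have h1 : Tendsto (fun a : ℝ => a * (f m - L)) atTop atBot :=
        tendsto_id.atTop_mul_const_of_neg hlt
      have h2 : Tendsto (fun a : ℝ => Real.exp (a * (f m - L))) atTop (nhds 0) :=
        Real.tendsto_exp_atBot.comp h1
      have := h2.const_mul (h.coeff m * (p 0 ^ (m 0) * p 1 ^ (m 1)))
      simpa [mul_comm, mul_assoc] using this
  refine ge_of_tendsto' htend fun a => ?_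
  exact mul_nonneg (hpos _) (Real.exp_pos _).le
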